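/- arXiv:1603.08586 — 4 statements merged into one kernel-verified Lean document; each statement's English description precedes it below -/
import Mathlib

section
/- If a finite simplicial graph Γ contains an induced 4-cycle, then the right-angled Artin group G(Γ) contains a subgroup isomorphic to F₂ × F₂, the direct product of two free groups of rank 2. -/
open scoped commutatorElement

/-- The set of defining relators of the right-angled Artin group of a graph. -/
def raagRels {V : Type*} (G : SimpleGraph V) : Set (FreeGroup V) :=
  {r | ∃ a b : V, G.Adj a b ∧ r = ⁅FreeGroup.of a, FreeGroup.of b⁆}

/-- The right-angled Artin group of a graph. -/
abbrev RAAG {V : Type*} (G : SimpleGraph V) : Type _ :=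
  PresentedGroup (raagRels G)

/-!
Let `a, c` and `b, d` be the two diagonals of the square. Sending `a, c` to the generators of
the first free factor, `b, d` to those of the second and every other vertex to `1` respects the
relations, because no edge joins two vertices of the same diagonal. This gives a retraction
`G(Γ) → F₂ × F₂`. Conversely, since `a, c` commute with `b, d`, the free groups they generate
commute and give a homomorphism `F₂ × F₂ → G(Γ)`, which is injective because the retraction
is a left inverse of it.
-/

theorem FreeGroup.commute_lift_lift {α β H : Type*} [Group H] {f : α → H} {g : β → H}
    (h : ∀ x y, Commute (f x) (g y)) (m : FreeGroup α) (n : FreeGroup β) :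
    Commute (FreeGroup.lift f m) (FreeGroup.lift g n) := by
  have hle : (FreeGroup.lift g).range ≤ Subgroup.centralizer (FreeGroup.lift f).range := by
    rw [FreeGroup.range_lift_eq_closure, FreeGroup.range_lift_eq_closure, Subgroup.closure_le,
      Subgroup.centralizer_closure]
    rintro _ ⟨y, rfl⟩ _ ⟨x, rfl⟩
    exact h x y
  exact Subgroup.mem_centralizer_iff.mp (hle ⟨n, rfl⟩) _ ⟨m, rfl⟩

namespace RAAG

variable {V : Type*} {G : SimpleGraph V}

theorem commute_of_adj {u v : V} (h : G.Adj u v) :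
    Commute (PresentedGroup.of (rels := raagRels G) u) (PresentedGroup.of v) := by
  rw [← commutatorElement_eq_one_iff_commute]
  exact PresentedGroup.one_of_mem ⟨u, v, h, rfl⟩

def lift {H : Type*} [Group H] (f : V → H) (hf : ∀ u v, G.Adj u v → Commute (f u) (f v)) :
    RAAG G →* H :=
  PresentedGroup.toGroup (f := f) <| by
    rintro _ ⟨u, v, huv, rfl⟩
    rw [map_commutatorElement, FreeGroup.lift_apply_of, FreeGroup.lift_apply_of,
      commutatorElement_eq_one_iff_commute]
    exact hf u v huv

@[simp]
theorem lift_of {H : Type*} [Group H] (f : V → H) (hf : ∀ u v, G.Adj u v → Commute (f u) (f v))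
    (v : V) : lift f hf (PresentedGroup.of v) = f v :=
  PresentedGroup.toGroup.of _

section Retraction

variable {α : Type*} {i : α → V} (hi : ∀ x y, ¬ G.Adj (i x) (i y))
include hi

noncomputable def freeRetraction : RAAG G →* FreeGroup α :=
  lift (Function.extend i FreeGroup.of 1) <| by
    intro u v huv
    by_cases hu : ∃ x, i x = u
    · by_cases hv : ∃ y, i y = v
      · obtain ⟨x, rfl⟩ := hu
        obtain ⟨y, rfl⟩ := hv
        exact absurd huv (hi x y)
      · rw [Function.extend_apply' _ _ _ hv]
        exact Commute.one_right _
    · rw [Function.extend_apply' _ _ _ hu]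
      exact Commute.one_left _

theorem freeRetraction_lift_of_comp (hinj : Function.Injective i) (m : FreeGroup α) :
    freeRetraction hi (FreeGroup.lift (PresentedGroup.of ∘ i) m) = m :=
  DFunLike.congr_fun (FreeGroup.ext_hom ((freeRetraction hi).comp _) (MonoidHom.id _)
    fun x => by simp [freeRetraction, hinj.extend_apply]) m

theorem freeRetraction_lift_of_comp_eq_one {β : Type*} {j : β → V} (hij : ∀ x y, i x ≠ j y)
    (n : FreeGroup β) : freeRetraction hi (FreeGroup.lift (PresentedGroup.of ∘ j) n) = 1 :=
  DFunLike.congr_fun (FreeGroup.ext_hom ((freeRetraction hi).comp _) 1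
    fun y => by simp [freeRetraction, Function.extend_apply' _ _ _ (not_exists.mpr (hij · y))]) n

end Retraction

theorem exists_injective_freeGroup_prod {α β : Type*} {i : α → V} {j : β → V}
    (hi : Function.Injective i) (hj : Function.Injective j)
    (hi' : ∀ x y, ¬ G.Adj (i x) (i y)) (hj' : ∀ x y, ¬ G.Adj (j x) (j y))
    (hij : ∀ x y, G.Adj (i x) (j y)) :
    ∃ ψ : FreeGroup α × FreeGroup β →* RAAG G, Function.Injective ψ := by
  let ψ := (FreeGroup.lift (PresentedGroup.of ∘ i)).noncommCoprod
    (FreeGroup.lift (PresentedGroup.of ∘ j))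
    (FreeGroup.commute_lift_lift fun x y => commute_of_adj (hij x y))
  let φ := (freeRetraction hi').prod (freeRetraction hj')
  have hφψ : ∀ x, φ (ψ x) = x := by
    rintro ⟨m, n⟩
    simp only [φ, ψ, MonoidHom.noncommCoprod_apply, MonoidHom.prod_apply, map_mul,
      freeRetraction_lift_of_comp _ hi, freeRetraction_lift_of_comp _ hj,
      freeRetraction_lift_of_comp_eq_one hi' fun x y => (hij x y).ne,
      freeRetraction_lift_of_comp_eq_one hj' fun y x => (hij x y).ne.symm,
      Prod.mk_mul_mk, mul_one, one_mul]
  exact ⟨ψ, Function.LeftInverse.injective (g := φ) hφψ⟩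

end RAAG

theorem stmt11_general {V : Type*} (G : SimpleGraph V)
    (a b c d : V) (hac' : a ≠ c) (hbd' : b ≠ d)
    (hab : G.Adj a b) (hbc : G.Adj b c) (hcd : G.Adj c d) (hda : G.Adj d a)
    (hac : ¬ G.Adj a c) (hbd : ¬ G.Adj b d) :
    ∃ H : Subgroup (RAAG G),
      Nonempty (H ≃* (FreeGroup (Fin 2) × FreeGroup (Fin 2))) := by
  have hinj {u v : V} (huv : u ≠ v) : Function.Injective ![u, v] := by
    intro x y
    fin_cases x <;> fin_cases y <;> simp [huv, huv.symm]
  have hindep {u v : V} (huv : ¬ G.Adj u v) : ∀ x y, ¬ G.Adj (![u, v] x) (![u, v] y) := by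
    intro x y
    fin_cases x <;> fin_cases y <;> simp [huv, G.adj_comm v u]
  obtain ⟨ψ, hψ⟩ := RAAG.exists_injective_freeGroup_prod (hinj hac') (hinj hbd')
    (hindep hac) (hindep hbd) (by
      intro x y
      fin_cases x <;> fin_cases y
      exacts [hab, hda.symm, hbc.symm, hcd])
  exact ⟨ψ.range, ⟨(MonoidHom.ofInjective hψ).symm⟩⟩

/-- If Γ contains an induced 4-cycle, then G(Γ) contains a subgroup
isomorphic to F₂ × F₂. -/
theorem stmt11 {V : Type*} [Fintype V] (G : SimpleGraph V)
    (a b c d : V) (hab' : a ≠ b) (hac' : a ≠ c) (had' : a ≠ d)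
    (hbc' : b ≠ c) (hbd' : b ≠ d) (hcd' : c ≠ d)
    (hab : G.Adj a b) (hbc : G.Adj b c) (hcd : G.Adj c d) (hda : G.Adj d a)
    (hac : ¬ G.Adj a c) (hbd : ¬ G.Adj b d) :
    ∃ H : Subgroup (RAAG G),
      Nonempty (H ≃* (FreeGroup (Fin 2) × FreeGroup (Fin 2))) :=
  stmt11_general G a b c d hac' hbd' hab hbc hcd hda hac hbd
end

section
/- Let 1 → K → G → ℤ → 1 be a short exact sequence of groups with quotient map φ : G → ℤ, and let α ∈ G with φ(α) = 1. Suppose there exist a positive integer n and an element k ∈ K such that conjugation by αⁿ and conjugation by k agree on K. Then φ⁻¹(nℤ) is isomorphic to the direct product K × ℤ; more precisely, the element β = αⁿ k⁻¹ centralizes K, has infinite order, satisfies ⟨β⟩ ∩ K = {1}, and φ⁻¹(nℤ) = K⟨β⟩. -/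
/-!
Write `β = αⁿ k⁻¹`. Since conjugation by `αⁿ` and by `k` agree on `K = ker φ`, conjugation by `β`
is trivial on `K`. As `φ β = n ≠ 0`, no nontrivial power of `β` lies in `K`, and every `g` with
`n ∣ φ g` factors as `g = x βᵐ` with `x ∈ K`. Hence `(x, m) ↦ x βᵐ` is an injective homomorphism
`K × ℤ → G` whose image is `φ⁻¹(nℤ)`.
-/

open Multiplicative

theorem Multiplicative.mem_zpowers_ofAdd_iff {n : ℤ} {x : Multiplicative ℤ} :
    x ∈ Subgroup.zpowers (ofAdd n) ↔ n ∣ x.toAdd :=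
  Int.mem_zmultiples_iff

theorem Subgroup.commute_mul_inv_of_conj_eq {G : Type*} [Group G] {N : Subgroup G} [N.Normal]
    {a k : G} (h : ∀ x ∈ N, a * x * a⁻¹ = k * x * k⁻¹) {x : G} (hx : x ∈ N) :
    Commute (a * k⁻¹) x := by
  have hconj : a * (k⁻¹ * x * k) * a⁻¹ = x := by
    rw [h _ (by simpa using Subgroup.Normal.conj_mem ‹_› x hx k⁻¹)]
    group
  calc a * k⁻¹ * x = a * (k⁻¹ * x * k) * a⁻¹ * (a * k⁻¹) := by group
    _ = x * (a * k⁻¹) := by rw [hconj]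

namespace MonoidHom

variable {G : Type*} [Group G] {φ : G →* Multiplicative ℤ} {β : G} {n : ℤ}

theorem toAdd_map_zpow_of_map_eq (hβ : φ β = ofAdd n) (m : ℤ) : (φ (β ^ m)).toAdd = m * n := by
  rw [map_zpow, toAdd_zpow, hβ, toAdd_ofAdd, smul_eq_mul]

theorem zpow_mem_ker_iff_of_map_eq (hβ : φ β = ofAdd n) (hn : n ≠ 0) {m : ℤ} :
    β ^ m ∈ φ.ker ↔ m = 0 := by
  rw [mem_ker, ← toAdd_eq_zero, toAdd_map_zpow_of_map_eq hβ, mul_eq_zero, or_iff_left hn]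

theorem dvd_toAdd_iff_exists_mem_ker_mul_zpow (hβ : φ β = ofAdd n) (g : G) :
    n ∣ (φ g).toAdd ↔ ∃ x ∈ φ.ker, ∃ m : ℤ, g = x * β ^ m := by
  constructor
  · rintro ⟨m, hm⟩
    refine ⟨g * β ^ (-m), ?_, m, by group⟩
    rw [mem_ker, ← toAdd_eq_zero, map_mul, toAdd_mul, toAdd_map_zpow_of_map_eq hβ, hm]
    ring
  · rintro ⟨x, hx, m, rfl⟩
    refine ⟨m, ?_⟩
    rw [map_mul, toAdd_mul, mem_ker.mp hx, toAdd_one, toAdd_map_zpow_of_map_eq hβ]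
    ring

variable (φ) in
def kerProdZpowers (hcomm : ∀ x ∈ φ.ker, Commute β x) : φ.ker × Multiplicative ℤ →* G :=
  φ.ker.subtype.noncommCoprod (zpowersHom G β) fun x m => ((hcomm x x.2).zpow_left m.toAdd).symm

variable (hcomm : ∀ x ∈ φ.ker, Commute β x)

theorem kerProdZpowers_apply (p : φ.ker × Multiplicative ℤ) :
    kerProdZpowers φ hcomm p = p.1 * β ^ p.2.toAdd :=
  rfl

theorem kerProdZpowers_injective (hβ : φ β = ofAdd n) (hn : n ≠ 0) :
    Function.Injective (kerProdZpowers φ hcomm) := by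
  refine (injective_iff_map_eq_one _).mpr fun p h => ?_
  rw [kerProdZpowers_apply, mul_eq_one_iff_eq_inv] at h
  have hm : p.2.toAdd = 0 :=
    (zpow_mem_ker_iff_of_map_eq hβ hn).mp (inv_mem_iff.mp (h ▸ p.1.2))
  rw [hm, zpow_zero, inv_one] at h
  exact Prod.ext (Subtype.ext h) hm

theorem range_kerProdZpowers (hβ : φ β = ofAdd n) :
    (kerProdZpowers φ hcomm).range = (Subgroup.zpowers (ofAdd n)).comap φ := by
  ext g
  rw [Subgroup.mem_comap, mem_zpowers_ofAdd_iff, dvd_toAdd_iff_exists_mem_ker_mul_zpow hβ]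
  constructor
  · rintro ⟨⟨x, m⟩, rfl⟩
    exact ⟨x, x.2, m.toAdd, rfl⟩
  · rintro ⟨x, hx, m, rfl⟩
    exact ⟨(⟨x, hx⟩, ofAdd m), rfl⟩

end MonoidHom

open MonoidHom in
theorem stmt12_general {G : Type*} [Group G] (φ : G →* Multiplicative ℤ)
    (α : G) (hα : φ α = Multiplicative.ofAdd 1)
    (n : ℕ) (hn : 0 < n) (k : G) (hk : k ∈ φ.ker)
    (hconj : ∀ x ∈ φ.ker, α ^ n * x * (α ^ n)⁻¹ = k * x * k⁻¹) :
    (∀ x ∈ φ.ker, (α ^ n * k⁻¹) * x = x * (α ^ n * k⁻¹)) ∧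
    (∀ m : ℤ, (α ^ n * k⁻¹) ^ m = 1 → m = 0) ∧
    (∀ m : ℤ, (α ^ n * k⁻¹) ^ m ∈ φ.ker → m = 0) ∧
    (∀ g : G, ((n : ℤ) ∣ Multiplicative.toAdd (φ g)) ↔
      ∃ x ∈ φ.ker, ∃ m : ℤ, g = x * (α ^ n * k⁻¹) ^ m) ∧
    Nonempty (((Subgroup.zpowers (Multiplicative.ofAdd (n : ℤ))).comap φ) ≃*
      (φ.ker × Multiplicative ℤ)) := by
  have hβ : φ (α ^ n * k⁻¹) = ofAdd (n : ℤ) := by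
    rw [map_mul, map_pow, map_inv, mem_ker.mp hk, inv_one, mul_one, hα, ← ofAdd_nsmul, nsmul_one]
  have hn' : (n : ℤ) ≠ 0 := by exact_mod_cast hn.ne'
  have hcomm : ∀ x ∈ φ.ker, Commute (α ^ n * k⁻¹) x :=
    fun _ => Subgroup.commute_mul_inv_of_conj_eq hconj
  have hker := fun m => (zpow_mem_ker_iff_of_map_eq (m := m) hβ hn').mp
  refine ⟨hcomm, fun m hm => hker m (hm ▸ one_mem _), hker,
    dvd_toAdd_iff_exists_mem_ker_mul_zpow hβ, ⟨?_⟩⟩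
  rw [← range_kerProdZpowers hcomm hβ]
  exact (ofInjective (kerProdZpowers_injective hcomm hβ hn')).symm

/-- Given 1 → K → G → ℤ → 1 with quotient map φ, α ∈ G with φ(α) = 1, and n > 0,
k ∈ K such that conjugation by αⁿ agrees with conjugation by k on K, the element
β = αⁿ k⁻¹ centralizes K, has infinite order, meets K trivially, and
φ⁻¹(nℤ) = K⟨β⟩; hence φ⁻¹(nℤ) ≅ K × ℤ. -/
theorem stmt12 {G : Type*} [Group G] (φ : G →* Multiplicative ℤ)
    (hsurj : Function.Surjective φ) (α : G) (hα : φ α = Multiplicative.ofAdd 1)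
    (n : ℕ) (hn : 0 < n) (k : G) (hk : k ∈ φ.ker)
    (hconj : ∀ x ∈ φ.ker, α ^ n * x * (α ^ n)⁻¹ = k * x * k⁻¹) :
    (∀ x ∈ φ.ker, (α ^ n * k⁻¹) * x = x * (α ^ n * k⁻¹)) ∧
    (∀ m : ℤ, (α ^ n * k⁻¹) ^ m = 1 → m = 0) ∧
    (∀ m : ℤ, (α ^ n * k⁻¹) ^ m ∈ φ.ker → m = 0) ∧
    (∀ g : G, ((n : ℤ) ∣ Multiplicative.toAdd (φ g)) ↔
      ∃ x ∈ φ.ker, ∃ m : ℤ, g = x * (α ^ n * k⁻¹) ^ m) ∧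
    Nonempty (((Subgroup.zpowers (Multiplicative.ofAdd (n : ℤ))).comap φ) ≃*
      (φ.ker × Multiplicative ℤ)) :=
  stmt12_general φ α hα n hn k hk hconj
end

section
/- Let Z be a metric space such that for every r > 0 there exists N(r) such that every ball of radius r in Z contains at most N(r) points. Let A be a group acting faithfully on Z by (L, C)-quasi-isometries, and let B be a normal subgroup of A that is finitely generated and acts discretely and cocompactly on Z. Then B has finite index in A. -/
/-!
Cocompactness puts a representative of every coset of `B` in the set of elements moving a
base point `p` by a bounded amount, so it suffices that this set is finite. Conjugation by such
an element sends each of the finitely many generators of `B` into `B` with bounded displacement,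
hence into a finite set by discreteness. Two elements with the same conjugation data differ by
an element centralizing `B` of bounded displacement; by faithfulness such an element is
determined by its values on a ball meeting every `B`-orbit, which is finite, and these values
range over finite balls.
-/

open Metric

theorem Subgroup.finiteIndex_of_forall_exists_inv_mul_mem {A : Type*} [Group A]
    {B : Subgroup A} {T : Set A} (hT : T.Finite) (hcov : ∀ a : A, ∃ b ∈ B, b⁻¹ * a ∈ T) :
    B.FiniteIndex := by
  -- `a⁻¹ = b * t` gives `a B = t⁻¹ B`
  have : Finite (A ⧸ B) := by
    refine Set.finite_univ_iff.mp ((hT.image fun t => ((t⁻¹ : A) : A ⧸ B)).subset ?_)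
    rintro x -
    obtain ⟨a, rfl⟩ := QuotientGroup.mk_surjective x
    obtain ⟨b, hb, ht⟩ := hcov a⁻¹
    exact ⟨_, ht, QuotientGroup.eq.mpr (by simpa [mul_assoc] using B.inv_mem hb)⟩
  exact Subgroup.finiteIndex_of_finite_quotient

section

variable {A Z : Type*} [Group A] [MetricSpace Z] [MulAction A Z]

variable (A Z) in
def IsCoarseLipschitzSMul (K C : ℝ) : Prop :=
  ∀ (a : A) (x y : Z), dist (a • x) (a • y) ≤ K * dist x y + C

namespace IsCoarseLipschitzSMul

variable {K C : ℝ}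

theorem dist_inv_smul_le (h : IsCoarseLipschitzSMul A Z K C) (a : A) (z p : Z) :
    dist (a⁻¹ • z) p ≤ K * dist z (a • p) + C := by
  simpa using h a⁻¹ z (a • p)

theorem dist_inv_smul_self_le (h : IsCoarseLipschitzSMul A Z K C) (a : A) (p : Z) :
    dist (a⁻¹ • p) p ≤ K * dist (a • p) p + C := by
  simpa [dist_comm p] using h.dist_inv_smul_le a p p

theorem dist_mul_smul_self_le (h : IsCoarseLipschitzSMul A Z K C) (a b : A) (p : Z) :
    dist ((a * b) • p) p ≤ K * dist (b • p) p + C + dist (a • p) p := by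
  rw [mul_smul]
  exact (dist_triangle _ (a • p) _).trans (by gcongr; exact h a _ _)

theorem dist_inv_mul_smul_self_le (h : IsCoarseLipschitzSMul A Z K C) (hK : 0 ≤ K)
    {g g' : A} {p : Z} {R : ℝ} (hg : dist (g • p) p ≤ R) (hg' : dist (g' • p) p ≤ R) :
    dist ((g⁻¹ * g') • p) p ≤ K * R + C + (K * R + C) :=
  calc dist ((g⁻¹ * g') • p) p ≤ K * dist (g' • p) p + C + (K * dist (g • p) p + C) :=
        (h.dist_mul_smul_self_le _ _ p).trans (by gcongr; exact h.dist_inv_smul_self_le g p)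
    _ ≤ K * R + C + (K * R + C) := by gcongr

theorem dist_conj_smul_self_le (h : IsCoarseLipschitzSMul A Z K C) (hK : 0 ≤ K)
    {g s : A} {p : Z} {R M : ℝ} (hg : dist (g • p) p ≤ R) (hs : dist (s • p) p ≤ M) :
    dist ((g * s * g⁻¹) • p) p ≤ K * (K * (K * R + C) + C + M) + C + R := by
  rw [mul_assoc]
  calc dist ((g * (s * g⁻¹)) • p) p
      ≤ K * (K * dist (g⁻¹ • p) p + C + dist (s • p) p) + C + dist (g • p) p := by
        refine (h.dist_mul_smul_self_le _ _ p).trans ?_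
        gcongr
        exact h.dist_mul_smul_self_le _ _ p
    _ ≤ K * (K * (K * dist (g • p) p + C) + C + M) + C + R := by
        gcongr
        exact h.dist_inv_smul_self_le g p
    _ ≤ K * (K * (K * R + C) + C + M) + C + R := by gcongr

theorem finite_centralizer_inter_dist_smul_le [FaithfulSMul A Z]
    (h : IsCoarseLipschitzSMul A Z K C) (hK : 0 ≤ K)
    (hball : ∀ (z : Z) (r : ℝ), (closedBall z r).Finite) {B : Subgroup A} {p : Z} {R : ℝ}
    (hcover : ∀ z : Z, ∃ b ∈ B, dist (b⁻¹ • z) p ≤ R) (R' : ℝ) :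
    {c ∈ Subgroup.centralizer (B : Set A) | dist (c • p) p ≤ R'}.Finite := by
  have : Finite (closedBall p R) := (hball p R).to_subtype
  let F : A → closedBall p R → Z := fun c z => c • (z : Z)
  refine Set.Finite.of_finite_image (f := F) ?_ ?_
  · refine (Set.Finite.pi (t := fun z : closedBall p R => closedBall (z : Z) (K * R + C + R' + R))
      fun z => hball _ _).subset ?_
    rintro _ ⟨c, ⟨-, hc⟩, rfl⟩ ⟨z, hz⟩ -
    rw [mem_closedBall] at hz
    calc dist (c • z) z ≤ dist (c • z) (c • p) + dist (c • p) p + dist p z := dist_triangle4 _ _ _ _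
      _ ≤ K * R + C + R' + R := by
        gcongr
        · exact (h c z p).trans (by gcongr)
        · rwa [dist_comm]
  · rintro c ⟨hc, -⟩ c' ⟨hc', -⟩ hcc'
    refine eq_of_smul_eq_smul (α := Z) fun z => ?_
    obtain ⟨b, hb, hz⟩ := hcover z
    have hw : c • b⁻¹ • z = c' • b⁻¹ • z := congrFun hcc' ⟨b⁻¹ • z, mem_closedBall.mpr hz⟩
    have hcomm : ∀ d ∈ Subgroup.centralizer (B : Set A), d • z = b • d • b⁻¹ • z := by
      intro d hd
      rw [← mul_smul, Subgroup.mem_centralizer_iff.mp hd b hb, mul_smul, smul_inv_smul]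
    rw [hcomm c hc, hcomm c' hc', hw]

theorem finite_dist_smul_le [FaithfulSMul A Z]
    (h : IsCoarseLipschitzSMul A Z K C) (hK : 0 ≤ K)
    (hball : ∀ (z : Z) (r : ℝ), (closedBall z r).Finite) {B : Subgroup A} (hnorm : B.Normal)
    {S : Finset A} (hS : Subgroup.closure (S : Set A) = B) {p : Z}
    (hdisc : ∀ R : ℝ, {b : A | b ∈ B ∧ dist (b • p) p ≤ R}.Finite) {D : ℝ}
    (hcover : ∀ z : Z, ∃ b ∈ B, dist (b⁻¹ • z) p ≤ D) (R : ℝ) :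
    {g : A | dist (g • p) p ≤ R}.Finite := by
  obtain ⟨M, hM⟩ := (S.image fun s => dist (s • p) p).exists_le
  let Φ : A → S → A := fun g s => g * s * g⁻¹
  refine Set.Finite.of_finite_fibers Φ ?_ ?_
  · refine (Set.Finite.pi (t := fun _ : S => {b : A | b ∈ B ∧ dist (b • p) p ≤ _})
      fun _ => hdisc (K * (K * (K * R + C) + C + M) + C + R)).subset ?_
    rintro _ ⟨g, hg, rfl⟩ ⟨s, hs⟩ -
    have hsB : s ∈ B := hS ▸ Subgroup.subset_closure hs
    exact ⟨hnorm.conj_mem s hsB g,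
      h.dist_conj_smul_self_le hK hg (hM _ (Finset.mem_image_of_mem _ hs))⟩
  · rintro _ ⟨g₀, hg₀, rfl⟩
    refine ((h.finite_centralizer_inter_dist_smul_le hK hball hcover
      (K * R + C + (K * R + C))).image (g₀ * ·)).subset ?_
    rintro g ⟨hg, hΦ⟩
    refine ⟨g₀⁻¹ * g, ⟨?_, h.dist_inv_mul_smul_self_le hK hg₀ hg⟩, mul_inv_cancel_left g₀ g⟩
    rw [← hS, Subgroup.centralizer_closure, Subgroup.mem_centralizer_iff]
    intro s hs
    have hconj : g * s * g⁻¹ = g₀ * s * g₀⁻¹ := congrFun hΦ ⟨s, hs⟩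
    calc s * (g₀⁻¹ * g) = g₀⁻¹ * (g₀ * s * g₀⁻¹) * g := by group
      _ = g₀⁻¹ * g * s := by rw [← hconj]; group

end IsCoarseLipschitzSMul

end

/-- Kleiner's lemma: if Z is a metric space with uniformly finite balls, A acts
faithfully on Z by (L, C)-quasi-isometries, and B ⊴ A is a finitely generated
normal subgroup acting discretely and cocompactly on Z, then B has finite
index in A. -/
theorem stmt13 {Z : Type*} [MetricSpace Z] {A : Type*} [Group A]
    (hZ : ∀ r : ℝ, 0 < r → ∃ N : ℕ, ∀ z : Z,
      (Metric.closedBall z r).Finite ∧ (Metric.closedBall z r).ncard ≤ N)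
    (ρ : A →* Equiv.Perm Z) (hfaith : Function.Injective ρ)
    (L C : ℝ)
    (hqi : ∀ (a : A) (x y : Z),
      L⁻¹ * dist x y - C ≤ dist (ρ a x) (ρ a y) ∧
      dist (ρ a x) (ρ a y) ≤ L * dist x y + C)
    (B : Subgroup A) (hnorm : B.Normal) (hfg : B.FG)
    (hdisc : ∀ (p : Z) (R : ℝ), {b : A | b ∈ B ∧ dist (ρ b p) p ≤ R}.Finite)
    (hcocpt : ∃ (p : Z) (D : ℝ), ∀ z : Z, ∃ b ∈ B, dist z (ρ b p) ≤ D) :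
    B.FiniteIndex := by
  let _ : MulAction A Z := MulAction.compHom Z ρ
  have : FaithfulSMul A Z := ⟨fun h => hfaith (Equiv.ext h)⟩
  have hball (z : Z) (r : ℝ) : (closedBall z r).Finite := by
    obtain ⟨N, hN⟩ := hZ (max r 1) (by positivity)
    exact (hN z).1.subset (closedBall_subset_closedBall (le_max_left r 1))
  -- `max L 0` rather than `L`, so that the bound is monotone in the distance
  have hlip : IsCoarseLipschitzSMul A Z (max L 0) C := fun a x y =>
    (hqi a x y).2.trans (by gcongr; exact le_max_left L 0)
  obtain ⟨p, D, hD⟩ := hcocpt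
  have hcover (z : Z) : ∃ b ∈ B, dist (b⁻¹ • z) p ≤ max L 0 * D + C := by
    obtain ⟨b, hb, hz⟩ := hD z
    exact ⟨b, hb, (hlip.dist_inv_smul_le b z p).trans (by gcongr; exact hz)⟩
  obtain ⟨S, hS⟩ := hfg
  refine Subgroup.finiteIndex_of_forall_exists_inv_mul_mem
    (hlip.finite_dist_smul_le (le_max_right L 0) hball hnorm hS (hdisc p) hcover
      (max L 0 * D + C)) fun a => ?_
  obtain ⟨b, hb, hab⟩ := hcover (a • p)
  exact ⟨b, hb, by rwa [Set.mem_ofPred_eq, mul_smul]⟩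
end

section
/- Let Γ be a finite simplicial graph with no induced 4-cycle. Call a vertex v of Γ 'type I' if there exists a vertex w not adjacent to and distinct from v with lk(v) ⊆ St(w). Then adjacency is an equivalence relation on the set of type I vertices of Γ: it is symmetric, and if v₁, v₂ and v₂, v₃ are adjacent type I vertices with v₁ ≠ v₃, then v₁ and v₃ are adjacent. -/
/-- In a graph with no induced 4-cycle, adjacency is an equivalence relation on
the set of type I vertices: it is symmetric, and transitive among distinct
type I vertices. A vertex v is type I if there is a vertex w ≠ v, not adjacent
to v, with lk(v) ⊆ St(w). -/
theorem stmt16 {V : Type*} [Fintype V] (G : SimpleGraph V)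
    (hno4 : ¬ ∃ a b c d : V, a ≠ b ∧ a ≠ c ∧ a ≠ d ∧ b ≠ c ∧ b ≠ d ∧ c ≠ d ∧
        G.Adj a b ∧ G.Adj b c ∧ G.Adj c d ∧ G.Adj d a ∧ ¬ G.Adj a c ∧ ¬ G.Adj b d) :
    (∀ v₁ v₂ : V,
      (∃ w : V, w ≠ v₁ ∧ ¬ G.Adj v₁ w ∧ ∀ u : V, G.Adj v₁ u → (u = w ∨ G.Adj w u)) →
      (∃ w : V, w ≠ v₂ ∧ ¬ G.Adj v₂ w ∧ ∀ u : V, G.Adj v₂ u → (u = w ∨ G.Adj w u)) →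
      G.Adj v₁ v₂ → G.Adj v₂ v₁) ∧
    (∀ v₁ v₂ v₃ : V,
      (∃ w : V, w ≠ v₁ ∧ ¬ G.Adj v₁ w ∧ ∀ u : V, G.Adj v₁ u → (u = w ∨ G.Adj w u)) →
      (∃ w : V, w ≠ v₂ ∧ ¬ G.Adj v₂ w ∧ ∀ u : V, G.Adj v₂ u → (u = w ∨ G.Adj w u)) →
      (∃ w : V, w ≠ v₃ ∧ ¬ G.Adj v₃ w ∧ ∀ u : V, G.Adj v₃ u → (u = w ∨ G.Adj w u)) →
      G.Adj v₁ v₂ → G.Adj v₂ v₃ → v₁ ≠ v₃ → G.Adj v₁ v₃) := by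
  constructor
  · intro v₁ v₂ _ _ h
    exact h.symm
  · rintro v₁ v₂ v₃ _ ⟨w, hwv, hnadj, hlk⟩ _ h12 h23 h13
    by_contra hnot
    have h21 : G.Adj v₂ v₁ := h12.symm
    have hw1 : G.Adj w v₁ := by
      rcases hlk v₁ h21 with rfl | h
      · exact absurd h21 hnadj
      · exact h
    have hw3 : G.Adj w v₃ := by
      rcases hlk v₃ h23 with rfl | h
      · exact absurd h23 hnadj
      · exact h
    exact hno4 ⟨v₂, v₁, w, v₃, h21.ne, hwv.symm, h23.ne, hw1.ne', h13, hw3.ne,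
      h21, hw1.symm, hw3, h23.symm, hnadj, fun h => hnot h⟩
end
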